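/- Let F and G be probability distributions on ℝ with finite p-th moment, 1 ≤ p < ∞, with quantile functions F^{-1}(u) = inf{x : F(x) ≥ u} and G^{-1}. Then the Wasserstein-p distance satisfies d_p(F,G) = ( ∫₀¹ |F^{-1}(u) - G^{-1}(u)|^p du )^{1/p}. -/

import Mathlib

/-!
The quantile coupling, the law of `(F⁻¹(U), G⁻¹(U))` for `U` uniform on `(0, 1)`, is a coupling of
`F` and `G` whose cost is the right-hand side, so it remains to see that no coupling is cheaper.
For `p ≥ 1`, `d ↦ d ^ p` on `[0, ∞)` is a mixture `∫ (d - q)⁺ dτ(q)` of hinge functions, and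
`(x - y - q)⁺` is the length of `{t | y ≤ t < x - q}`. By Tonelli the cost of a coupling `π` becomes
`∫∫ π {y ≤ t, t + q < x} + π {x ≤ t, t + q < y} dt dτ(q)`. Every coupling has
`π {y ≤ t, s < x} ≥ (G t - F s)⁺`, and the quantile coupling attains this bound.
-/

open MeasureTheory

/-- The Wasserstein-`p` distance between two measures on `ℝ`, defined as the infimum of
`(∫ |x - y|^p dπ)^{1/p}` over all couplings `π`. -/
noncomputable def wassersteinP (p : ℝ) (μ ν : Measure ℝ) : ℝ :=
  sInf { c | ∃ π : Measure (ℝ × ℝ), π.map Prod.fst = μ ∧ π.map Prod.snd = ν ∧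
    c = (∫ q, |q.1 - q.2| ^ p ∂π) ^ (1 / p) }

/-- The quantile function `F⁻¹(u) = inf {x : u ≤ F(x)}` of a measure on `ℝ`. -/
noncomputable def quantileFn (μ : Measure ℝ) (u : ℝ) : ℝ :=
  sInf { x : ℝ | u ≤ ProbabilityTheory.cdf μ x }

open Set ProbabilityTheory
open scoped ENNReal

section Quantile

variable (μ : Measure ℝ) {u : ℝ}

lemma bddBelow_setOf_le_cdf (hu : 0 < u) : BddBelow {x | u ≤ cdf μ x} := by
  obtain ⟨z, hz⟩ := ((tendsto_cdf_atBot μ).eventually (eventually_lt_nhds hu)).exists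
  exact ⟨z, fun y hy => (monotone_cdf μ).reflect_lt (hz.trans_le hy) |>.le⟩

lemma nonempty_setOf_le_cdf (hu : u < 1) : {x | u ≤ cdf μ x}.Nonempty :=
  ((tendsto_cdf_atTop μ).eventually (eventually_ge_nhds hu)).exists

lemma le_cdf_quantileFn (hu : u ∈ Ioo 0 1) : u ≤ cdf μ (quantileFn μ u) := by
  refine ge_of_tendsto (((cdf μ).right_continuous _).mono Ioi_subset_Ici_self) ?_
  filter_upwards [self_mem_nhdsWithin] with x hx
  obtain ⟨s, hs, hsx⟩ := exists_lt_of_csInf_lt (nonempty_setOf_le_cdf μ hu.2) hx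
  exact hs.trans (monotone_cdf μ hsx.le)

lemma quantileFn_le_iff (hu : u ∈ Ioo 0 1) {x : ℝ} : quantileFn μ u ≤ x ↔ u ≤ cdf μ x :=
  ⟨fun h => (le_cdf_quantileFn μ hu).trans (monotone_cdf μ h),
    fun h => csInf_le (bddBelow_setOf_le_cdf μ hu.1) h⟩

lemma monotoneOn_quantileFn : MonotoneOn (quantileFn μ) (Ioo 0 1) := fun _ hu _ hv huv =>
  (quantileFn_le_iff μ hu).2 (huv.trans (le_cdf_quantileFn μ hv))

lemma aemeasurable_quantileFn : AEMeasurable (quantileFn μ) (volume.restrict (Ioo 0 1)) :=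
  aemeasurable_restrict_of_monotoneOn measurableSet_Ioo (monotoneOn_quantileFn μ)

variable [IsProbabilityMeasure μ] in
lemma map_quantileFn : (volume.restrict (Ioo 0 1)).map (quantileFn μ) = μ := by
  refine Measure.ext_of_Iic _ _ fun x => ?_
  rw [Measure.map_apply_of_aemeasurable (aemeasurable_quantileFn μ) measurableSet_Iic,
    Measure.restrict_apply' measurableSet_Ioo, ← ofReal_cdf]
  have : quantileFn μ ⁻¹' Iic x ∩ Ioo 0 1 = Iic (cdf μ x) ∩ Ioo 0 1 := by
    ext u
    exact and_congr_left fun hu => quantileFn_le_iff μ hu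
  rw [this, measure_congr ((ae_eq_refl _).inter Ioo_ae_eq_Ioc), inter_comm, Ioc_inter_Iic,
    min_eq_right (cdf_le_one μ x), Real.volume_Ioc, sub_zero]

end Quantile

section CdfBounds

variable {μ ν : Measure ℝ}

variable [IsProbabilityMeasure μ] [IsProbabilityMeasure ν] in
lemma ofReal_cdf_sub_le_measure {Ω : Type*} [MeasurableSpace Ω] {P : Measure Ω} {X Y : Ω → ℝ}
    (hX : AEMeasurable X P) (hY : AEMeasurable Y P) (hPX : P.map X = μ) (hPY : P.map Y = ν)
    (s t : ℝ) :
    ENNReal.ofReal (cdf ν t) - ENNReal.ofReal (cdf μ s) ≤ P {ω | Y ω ≤ t ∧ s < X ω} := by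
  rw [tsub_le_iff_right, ofReal_cdf, ofReal_cdf, ← hPX, ← hPY,
    Measure.map_apply_of_aemeasurable hY measurableSet_Iic,
    Measure.map_apply_of_aemeasurable hX measurableSet_Iic]
  refine (measure_mono fun ω hω => ?_).trans (measure_union_le _ _)
  by_cases h : s < X ω
  · exact Or.inl ⟨hω, h⟩
  · exact Or.inr (not_lt.1 h)

variable (μ ν) in
lemma volume_quantileFn_le_lt_le (s t : ℝ) :
    volume.restrict (Ioo 0 1) {u | quantileFn ν u ≤ t ∧ s < quantileFn μ u}
      ≤ ENNReal.ofReal (cdf ν t) - ENNReal.ofReal (cdf μ s) := by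
  rw [Measure.restrict_apply' measurableSet_Ioo, ← ENNReal.ofReal_sub _ (cdf_nonneg μ s),
    ← Real.volume_Ioc]
  refine measure_mono fun u ⟨⟨hν, hμ⟩, hu⟩ => ⟨?_, (quantileFn_le_iff ν hu).1 hν⟩
  exact lt_of_not_ge fun h => hμ.not_ge ((quantileFn_le_iff μ hu).2 h)

end CdfBounds

lemma intervalIntegrable_hinge_rpow {p : ℝ} (hp : 1 < p) {a d : ℝ} :
    IntervalIntegrable (fun q : ℝ => p * (p - 1) * q ^ (p - 2) * (d - q)) volume a d :=
  ((intervalIntegral.intervalIntegrable_rpow' (by linarith)).const_mul _).mul_continuousOn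
    (by fun_prop)

lemma integral_hinge_rpow {p : ℝ} (hp : 1 < p) {d : ℝ} (hd : 0 ≤ d) :
    ∫ q in (0:ℝ)..d, p * (p - 1) * q ^ (p - 2) * (d - q) = d ^ p := by
  have hderiv : ∀ q ∈ Ioo 0 d, HasDerivAt (fun q => p * d * q ^ (p - 1) - (p - 1) * q ^ p)
      (p * (p - 1) * q ^ (p - 2) * (d - q)) q := by
    intro q hq
    have hq0 := hq.1.ne'
    refine (((Real.hasDerivAt_rpow_const (p := p - 1) (Or.inl hq0)).const_mul (p * d)).sub
      ((Real.hasDerivAt_rpow_const (p := p) (Or.inl hq0)).const_mul (p - 1))).congr_deriv ?_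
    have hpow : q ^ (p - 1) = q ^ (p - 2) * q := by
      rw [← Real.rpow_add_one hq0]; ring_nf
    rw [show p - 1 - 1 = p - 2 by ring, hpow]
    ring
  have hcont : ContinuousOn (fun q : ℝ => p * d * q ^ (p - 1) - (p - 1) * q ^ p) (Icc 0 d) :=
    ((continuous_const.mul (Real.continuous_rpow_const (by linarith))).sub
      (continuous_const.mul (Real.continuous_rpow_const (by linarith)))).continuousOn
  rw [intervalIntegral.integral_eq_sub_of_hasDerivAt_of_le hd hcont hderiv
    (intervalIntegrable_hinge_rpow hp),
    Real.zero_rpow (by linarith), Real.zero_rpow (by linarith)]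
  rcases hd.eq_or_lt with rfl | hd
  · simp [Real.zero_rpow (by linarith : p ≠ 0)]
  · rw [mul_assoc, ← Real.rpow_one_add' hd.le (by linarith)]
    ring_nf

-- The second distributional derivative of `d ↦ d ^ p` on `[0, ∞)`; an atom at `0` when `p = 1`.
noncomputable def hingeMeasure (p : ℝ) : Measure ℝ :=
  if p = 1 then Measure.dirac 0
  else (volume.restrict (Ioi 0)).withDensity fun q => ENNReal.ofReal (p * (p - 1) * q ^ (p - 2))

instance (p : ℝ) : SFinite (hingeMeasure p) := by
  unfold hingeMeasure; split_ifs <;> infer_instance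

lemma ae_hingeMeasure_nonneg (p : ℝ) : ∀ᵐ q ∂hingeMeasure p, 0 ≤ q := by
  unfold hingeMeasure
  split_ifs
  · exact (ae_dirac_iff measurableSet_Ici).2 le_rfl
  · exact (withDensity_absolutelyContinuous _ _).ae_le
      ((ae_restrict_mem measurableSet_Ioi).mono fun _ hq => le_of_lt hq)

lemma ofReal_rpow_eq_lintegral_hingeMeasure {p : ℝ} (hp : 1 ≤ p) {d : ℝ} (hd : 0 ≤ d) :
    ENNReal.ofReal (d ^ p) = ∫⁻ q, ENNReal.ofReal (d - q) ∂hingeMeasure p := by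
  rcases hp.eq_or_lt with rfl | hp
  · simp [hingeMeasure]
  have hdensity : ∀ q ∈ Ioc 0 d, 0 ≤ p * (p - 1) * q ^ (p - 2) := fun q hq =>
    mul_nonneg (by nlinarith) (Real.rpow_nonneg hq.1.le _)
  have hsupport : (fun q => ENNReal.ofReal (p * (p - 1) * q ^ (p - 2)) *
      ENNReal.ofReal (d - q)).support ⊆ Iic d := fun q hq => by
    by_contra h
    exact hq (by simp only [ENNReal.ofReal_of_nonpos (sub_nonpos.2 (not_le.1 h).le), mul_zero])
  rw [hingeMeasure, if_neg hp.ne', lintegral_withDensity_eq_lintegral_mul _ (by fun_prop)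
    (by fun_prop)]
  simp only [Pi.mul_apply]
  rw [← setLIntegral_eq_of_support_subset hsupport, Measure.restrict_restrict measurableSet_Iic,
    Iic_inter_Ioi, ← integral_hinge_rpow hp hd, intervalIntegral.integral_of_le hd,
    ofReal_integral_eq_lintegral_ofReal]
  · exact setLIntegral_congr_fun measurableSet_Ioc fun q hq =>
      ENNReal.ofReal_mul (hdensity q hq)
  · exact (intervalIntegrable_iff_integrableOn_Ioc_of_le hd).1
      (intervalIntegrable_hinge_rpow hp)
  · exact (ae_restrict_mem measurableSet_Ioc).mono fun q hq =>
      mul_nonneg (hdensity q hq) (sub_nonneg.2 hq.2)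

def layerSet (q t : ℝ) : Set (ℝ × ℝ) := {z | z.2 ≤ t ∧ t + q < z.1}

lemma measurableSet_layerSet (q t : ℝ) : MeasurableSet (layerSet q t) :=
  (measurableSet_le measurable_snd measurable_const).inter
    (measurableSet_lt measurable_const measurable_fst)

lemma indicator_layerSet_apply (q t : ℝ) (z : ℝ × ℝ) :
    (layerSet q t).indicator (1 : ℝ × ℝ → ℝ≥0∞) z = (Ico z.2 (z.1 - q)).indicator 1 t := by
  simp only [indicator_apply, layerSet, mem_ofPred_eq, mem_Ico, lt_sub_iff_add_lt, Pi.one_apply]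

noncomputable def hingeKernel (q t : ℝ) (z : ℝ × ℝ) : ℝ≥0∞ :=
  (layerSet q t).indicator 1 z + (layerSet q t).indicator 1 z.swap

lemma measurable_hingeKernel :
    Measurable fun w : ((ℝ × ℝ) × ℝ) × ℝ => hingeKernel w.1.2 w.2 w.1.1 := by
  have h : MeasurableSet {w : ((ℝ × ℝ) × ℝ) × ℝ | w.1.1 ∈ layerSet w.1.2 w.2} := by
    simp only [layerSet, mem_ofPred_eq]; measurability
  have h' : MeasurableSet {w : ((ℝ × ℝ) × ℝ) × ℝ | w.1.1.swap ∈ layerSet w.1.2 w.2} := by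
    simp only [layerSet, mem_ofPred_eq, Prod.fst_swap, Prod.snd_swap]; measurability
  exact (measurable_const.indicator h).add (measurable_const.indicator h')

lemma lintegral_hingeKernel {q : ℝ} (hq : 0 ≤ q) (z : ℝ × ℝ) :
    ∫⁻ t, hingeKernel q t z = ENNReal.ofReal (|z.1 - z.2| - q) := by
  simp only [hingeKernel, indicator_layerSet_apply, Prod.fst_swap, Prod.snd_swap]
  rw [lintegral_add_left (measurable_one.indicator measurableSet_Ico),
    lintegral_indicator_one measurableSet_Ico, lintegral_indicator_one measurableSet_Ico,
    Real.volume_Ico, Real.volume_Ico]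
  rcases abs_cases (z.1 - z.2) with ⟨h, h0⟩ | ⟨h, h0⟩
  · rw [h, ENNReal.ofReal_of_nonpos (p := z.2 - q - z.1) (by linarith), add_zero, sub_right_comm]
  · rw [h, ENNReal.ofReal_of_nonpos (p := z.1 - q - z.2) (by linarith), zero_add]
    congr 1; ring

lemma ofReal_abs_sub_rpow_eq_lintegral {p : ℝ} (hp : 1 ≤ p) (z : ℝ × ℝ) :
    ENNReal.ofReal (|z.1 - z.2| ^ p) = ∫⁻ q, (∫⁻ t, hingeKernel q t z) ∂hingeMeasure p := by
  rw [ofReal_rpow_eq_lintegral_hingeMeasure hp (abs_nonneg _)]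
  refine lintegral_congr_ae ?_
  filter_upwards [ae_hingeMeasure_nonneg p] with q hq
  exact (lintegral_hingeKernel hq z).symm

lemma lintegral_hingeKernel_measure (π : Measure (ℝ × ℝ)) (q t : ℝ) :
    ∫⁻ z, hingeKernel q t z ∂π = π (layerSet q t) + π (Prod.swap ⁻¹' layerSet q t) := by
  simp only [hingeKernel, ← indicator_comp_right, Pi.one_comp]
  rw [lintegral_add_left (measurable_one.indicator (measurableSet_layerSet q t)),
    lintegral_indicator_one (measurableSet_layerSet q t),
    lintegral_indicator_one (measurable_swap (measurableSet_layerSet q t))]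

lemma lintegral_ofReal_abs_sub_rpow {p : ℝ} (hp : 1 ≤ p) (π : Measure (ℝ × ℝ)) [SFinite π] :
    ∫⁻ z, ENNReal.ofReal (|z.1 - z.2| ^ p) ∂π
      = ∫⁻ q, (∫⁻ t, π (layerSet q t) + π (Prod.swap ⁻¹' layerSet q t)) ∂hingeMeasure p := by
  simp_rw [ofReal_abs_sub_rpow_eq_lintegral hp]
  rw [lintegral_lintegral_swap (measurable_hingeKernel.lintegral_prod_right').aemeasurable]
  refine lintegral_congr fun q => ?_
  rw [lintegral_lintegral_swap (f := fun z t => hingeKernel q t z)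
    (measurable_hingeKernel.comp
      ((measurable_fst.prodMk measurable_const).prodMk measurable_snd)).aemeasurable]
  simp_rw [lintegral_hingeKernel_measure]

noncomputable def quantileCoupling (μ ν : Measure ℝ) : Measure (ℝ × ℝ) :=
  (volume.restrict (Ioo 0 1)).map fun u => (quantileFn μ u, quantileFn ν u)

section QuantileCoupling

variable {μ ν : Measure ℝ}

instance : IsFiniteMeasure (quantileCoupling μ ν) := by
  unfold quantileCoupling; infer_instance

lemma aemeasurable_quantileFn_prod :
    AEMeasurable (fun u => (quantileFn μ u, quantileFn ν u)) (volume.restrict (Ioo 0 1)) :=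
  (aemeasurable_quantileFn μ).prodMk (aemeasurable_quantileFn ν)

variable [IsProbabilityMeasure μ] in
lemma quantileCoupling_map_fst : (quantileCoupling μ ν).map Prod.fst = μ := by
  rw [quantileCoupling, AEMeasurable.map_map_of_aemeasurable measurable_fst.aemeasurable
    aemeasurable_quantileFn_prod]
  exact map_quantileFn μ

variable [IsProbabilityMeasure ν] in
lemma quantileCoupling_map_snd : (quantileCoupling μ ν).map Prod.snd = ν := by
  rw [quantileCoupling, AEMeasurable.map_map_of_aemeasurable measurable_snd.aemeasurable
    aemeasurable_quantileFn_prod]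
  exact map_quantileFn ν

variable [IsProbabilityMeasure μ] [IsProbabilityMeasure ν]

lemma quantileCoupling_apply_layerSet_le {π : Measure (ℝ × ℝ)} (hπ₁ : π.map Prod.fst = μ)
    (hπ₂ : π.map Prod.snd = ν) (q t : ℝ) :
    quantileCoupling μ ν (layerSet q t) ≤ π (layerSet q t) ∧
      quantileCoupling μ ν (Prod.swap ⁻¹' layerSet q t) ≤ π (Prod.swap ⁻¹' layerSet q t) := by
  have hL := measurableSet_layerSet q t
  rw [quantileCoupling, Measure.map_apply_of_aemeasurable aemeasurable_quantileFn_prod hL,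
    Measure.map_apply_of_aemeasurable aemeasurable_quantileFn_prod (measurable_swap hL)]
  exact ⟨(volume_quantileFn_le_lt_le μ ν (t + q) t).trans
      (ofReal_cdf_sub_le_measure measurable_fst.aemeasurable measurable_snd.aemeasurable
        hπ₁ hπ₂ (t + q) t),
    (volume_quantileFn_le_lt_le ν μ (t + q) t).trans
      (ofReal_cdf_sub_le_measure measurable_snd.aemeasurable measurable_fst.aemeasurable
        hπ₂ hπ₁ (t + q) t)⟩

lemma lintegral_quantileCoupling_le {p : ℝ} (hp : 1 ≤ p) {π : Measure (ℝ × ℝ)}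
    (hπ₁ : π.map Prod.fst = μ) (hπ₂ : π.map Prod.snd = ν) :
    ∫⁻ z, ENNReal.ofReal (|z.1 - z.2| ^ p) ∂quantileCoupling μ ν
      ≤ ∫⁻ z, ENNReal.ofReal (|z.1 - z.2| ^ p) ∂π := by
  have : IsFiniteMeasure (π.map Prod.fst) := hπ₁ ▸ inferInstance
  have : IsFiniteMeasure π := Measure.isFiniteMeasure_of_map measurable_fst.aemeasurable
  rw [lintegral_ofReal_abs_sub_rpow hp, lintegral_ofReal_abs_sub_rpow hp]
  refine lintegral_mono fun q => lintegral_mono fun t => ?_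
  exact add_le_add (quantileCoupling_apply_layerSet_le hπ₁ hπ₂ q t).1
    (quantileCoupling_apply_layerSet_le hπ₁ hπ₂ q t).2

end QuantileCoupling

section FiniteCost

variable {μ ν : Measure ℝ}

lemma integrable_abs_sub_rpow {p : ℝ} (hp : 0 < p) {π : Measure (ℝ × ℝ)}
    (hπ₁ : π.map Prod.fst = μ) (hπ₂ : π.map Prod.snd = ν)
    (hμ : Integrable (fun x => |x| ^ p) μ) (hν : Integrable (fun x => |x| ^ p) ν) :
    Integrable (fun z : ℝ × ℝ => |z.1 - z.2| ^ p) π := by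
  have hp' : ENNReal.ofReal p ≠ 0 := by simpa using hp
  have memLp_of_map {f : ℝ × ℝ → ℝ} {ρ : Measure ℝ} (hf : Measurable f) (hρ : π.map f = ρ)
      (hint : Integrable (fun x => |x| ^ p) ρ) : MemLp f (ENNReal.ofReal p) π := by
    subst hρ
    refine (memLp_map_measure_iff aestronglyMeasurable_id hf.aemeasurable).1 ?_
    exact (integrable_norm_rpow_iff aestronglyMeasurable_id hp' ENNReal.ofReal_ne_top).1
      (by simpa [ENNReal.toReal_ofReal hp.le] using hint)
  simpa [ENNReal.toReal_ofReal hp.le] using (integrable_norm_rpow_iff (by fun_prop) hp'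
    ENNReal.ofReal_ne_top).2 ((memLp_of_map measurable_fst hπ₁ hμ).sub
      (memLp_of_map measurable_snd hπ₂ hν))

variable [IsProbabilityMeasure μ] [IsProbabilityMeasure ν]

lemma integral_quantileCoupling_le {p : ℝ} (hp : 1 ≤ p) {π : Measure (ℝ × ℝ)}
    (hπ₁ : π.map Prod.fst = μ) (hπ₂ : π.map Prod.snd = ν)
    (hμ : Integrable (fun x => |x| ^ p) μ) (hν : Integrable (fun x => |x| ^ p) ν) :
    ∫ z, |z.1 - z.2| ^ p ∂quantileCoupling μ ν ≤ ∫ z, |z.1 - z.2| ^ p ∂π := by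
  have hmeas : Measurable fun z : ℝ × ℝ => |z.1 - z.2| ^ p := by fun_prop
  rw [integral_eq_lintegral_of_nonneg_ae (ae_of_all _ fun _ => by positivity)
      hmeas.aestronglyMeasurable,
    integral_eq_lintegral_of_nonneg_ae (ae_of_all _ fun _ => by positivity)
      hmeas.aestronglyMeasurable]
  exact ENNReal.toReal_mono
    (integrable_abs_sub_rpow (by linarith) hπ₁ hπ₂ hμ hν).lintegral_lt_top.ne
    (lintegral_quantileCoupling_le hp hπ₁ hπ₂)

end FiniteCost

theorem wassersteinP_eq_integral_quantile (p : ℝ) (hp : 1 ≤ p)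
    (μ ν : Measure ℝ) [IsProbabilityMeasure μ] [IsProbabilityMeasure ν]
    (hμ : Integrable (fun x => |x| ^ p) μ) (hν : Integrable (fun x => |x| ^ p) ν) :
    wassersteinP p μ ν
      = (∫ u in Set.Ioo (0:ℝ) 1, |quantileFn μ u - quantileFn ν u| ^ p) ^ (1 / p) := by
  have hcost : ∫ u in Ioo (0:ℝ) 1, |quantileFn μ u - quantileFn ν u| ^ p
      = ∫ z, |z.1 - z.2| ^ p ∂quantileCoupling μ ν :=
    (integral_map aemeasurable_quantileFn_prod
      (by fun_prop : Measurable fun z : ℝ × ℝ => |z.1 - z.2| ^ p).aestronglyMeasurable).symm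
  rw [wassersteinP, hcost]
  refine IsLeast.csInf_eq ⟨⟨_, quantileCoupling_map_fst, quantileCoupling_map_snd, rfl⟩, ?_⟩
  rintro _ ⟨π, hπ₁, hπ₂, rfl⟩
  exact Real.rpow_le_rpow (integral_nonneg fun _ => by positivity)
    (integral_quantileCoupling_le hp hπ₁ hπ₂ hμ hν) (by positivity)
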